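/- arXiv:1306.5198 — 5 statements merged into one kernel-verified Lean document; each statement's English description precedes it below -/
import Mathlib

section
/- Polar of the Gain-to-Loss Ratio acceptance set: fix a real number m > 0 and let A^m := { X ∈ L¹(Ω, F, P) : E[X] ≥ m · E[X⁻] }. Then for every Z ∈ L^∞(Ω, F, P): ( E[Z·X] ≥ 0 for all X ∈ A^m ) if and only if there exists a real c ≥ 0 with c ≤ Z ≤ c(m+1) P-a.s. -/
/-!
If `c ≤ Z ≤ c(m+1)`, then pointwise `Z·X ≥ c·X - c·m·X⁻`, whose expectation is nonnegative
on `A^m`. Conversely, testing with indicators shows `Z ≥ 0`, and testing with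
`X = (m+1)P(B)·1_A - P(A)·1_B` for disjoint `A, B` (for which `E[X] = m·E[X⁻]`) gives
`P(A)·∫_B Z ≤ (m+1)·P(B)·∫_A Z`. For `A = {Z ≤ s}`, `B = {Z ≥ t}` with `t > (m+1)s` one of
the two sets is therefore null, so `c = ess inf Z` satisfies `Z ≤ c(m+1)` a.s.
-/

open MeasureTheory
open scoped ENNReal

variable {Ω : Type*} {m0 : MeasurableSpace Ω}

open Filter

def glrAcceptanceSet (P : Measure Ω) (m : ℝ) : Set (Ω → ℝ) :=
  {X | Integrable X P ∧ m * ∫ ω, max (-X ω) 0 ∂P ≤ ∫ ω, X ω ∂P}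

lemma mul_sub_mul_max_neg_le_mul {c m x z : ℝ} (hcz : c ≤ z) (hzc : z ≤ c * (m + 1)) :
    c * x - c * m * max (-x) 0 ≤ z * x := by
  rcases le_or_gt 0 x with hx | hx
  · rw [max_eq_right (by linarith)]
    nlinarith
  · rw [max_eq_left (by linarith)]
    nlinarith

lemma MeasureTheory.MemLp.isBoundedUnder_le_of_top {P : Measure Ω} {Z : Ω → ℝ} (hZ : MemLp Z ⊤ P) :
    IsBoundedUnder (· ≤ ·) (ae P) Z := by
  obtain ⟨C, hC⟩ := (eLpNormEssSup_lt_top_iff_isBoundedUnder (f := Z) (μ := P)).1 <| by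
    simpa only [eLpNorm_exponent_top] using hZ.2
  refine isBoundedUnder_of_eventually_le (a := (C : ℝ)) ?_
  filter_upwards [eventually_map.1 hC] with ω hω
  exact (Real.le_norm_self _).trans hω

lemma negPart_indicator_sub_indicator {A B : Set Ω} (hAB : Disjoint A B) {a b : ℝ} (ha : 0 ≤ a)
    (hb : 0 ≤ b) (ω : Ω) :
    max (-(A.indicator (fun _ => a) ω - B.indicator (fun _ => b) ω)) 0
      = B.indicator (fun _ => b) ω := by
  by_cases hA : ω ∈ A
  · simp [hA, Set.disjoint_left.1 hAB hA, ha]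
  · by_cases hB : ω ∈ B <;> simp [hA, hB, hb]

theorem exists_ae_bounds_of_ae_lt_or_ae_lt {P : Measure Ω} [NeZero P] {Z : Ω → ℝ} {k : ℝ}
    (hk : 0 < k) (hZ0 : 0 ≤ᵐ[P] Z) (hbdd : IsBoundedUnder (· ≤ ·) (ae P) Z)
    (hdich : ∀ s t, 0 ≤ s → k * s < t → (∀ᵐ ω ∂P, s < Z ω) ∨ ∀ᵐ ω ∂P, Z ω < t) :
    ∃ c : ℝ, 0 ≤ c ∧ ∀ᵐ ω ∂P, c ≤ Z ω ∧ Z ω ≤ c * k := by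
  have hcob : IsCoboundedUnder (· ≥ ·) (ae P) Z := hbdd.isCoboundedUnder_ge
  have hc0 : 0 ≤ essInf Z P := le_essInf_of_ae_le 0 hZ0 hcob
  have hup : ∀ᵐ ω ∂P, Z ω ≤ essInf Z P * k := by
    rw [eventually_le_const_iff_forall_gt_eventually_lt_const]
    intro t ht
    obtain ⟨u, hcu, hut⟩ := exists_between ht
    have hs : essInf Z P < u / k := by rwa [lt_div_iff₀ hk]
    refine (hdich (u / k) t (hc0.trans hs.le) (by rwa [mul_div_cancel₀ _ hk.ne'])).resolve_left
      fun hlt => hs.not_ge (le_essInf_of_ae_le _ (hlt.mono fun _ h => h.le) hcob)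
  refine ⟨essInf Z P, hc0, ?_⟩
  filter_upwards [ae_essInf_le (isBoundedUnder_of_eventually_ge hZ0), hup] with ω h₁ h₂
  exact ⟨h₁, h₂⟩

section Polar

variable {P : Measure Ω} {m : ℝ} {Z : Ω → ℝ}

theorem integral_mul_nonneg_of_ae_bounds (hZ : AEStronglyMeasurable Z P) {c : ℝ} (hc0 : 0 ≤ c)
    (hc : ∀ᵐ ω ∂P, c ≤ Z ω ∧ Z ω ≤ c * (m + 1)) {X : Ω → ℝ} (hX : X ∈ glrAcceptanceSet P m) :
    0 ≤ ∫ ω, Z ω * X ω ∂P := by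
  obtain ⟨hXint, hXacc⟩ := hX
  have hZX : Integrable (fun ω => Z ω * X ω) P :=
    hXint.bdd_mul hZ (c := c * (m + 1)) <| by
      filter_upwards [hc] with ω ⟨h1, h2⟩
      rw [Real.norm_eq_abs, abs_le]
      constructor <;> linarith
  have hlow : Integrable (fun ω => c * X ω - c * m * max (-X ω) 0) P :=
    (hXint.const_mul c).sub (hXint.neg_part.const_mul (c * m))
  calc 0 ≤ c * (∫ ω, X ω ∂P - m * ∫ ω, max (-X ω) 0 ∂P) :=
        mul_nonneg hc0 (sub_nonneg.2 hXacc)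
    _ = ∫ ω, (c * X ω - c * m * max (-X ω) 0) ∂P := by
        rw [integral_sub (hXint.const_mul c) (hXint.neg_part.const_mul (c * m)),
          integral_const_mul, integral_const_mul]
        ring
    _ ≤ ∫ ω, Z ω * X ω ∂P := integral_mono_ae hlow hZX <| by
        filter_upwards [hc] with ω ⟨h1, h2⟩ using mul_sub_mul_max_neg_le_mul h1 h2

theorem ae_nonneg_of_forall_mem_glrAcceptanceSet [IsFiniteMeasure P] (hZ : Integrable Z P)
    (H : ∀ X ∈ glrAcceptanceSet P m, 0 ≤ ∫ ω, Z ω * X ω ∂P) : 0 ≤ᵐ[P] Z := by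
  refine ae_nonneg_of_forall_setIntegral_nonneg hZ fun s hs _ => ?_
  have hX0 : 0 ≤ s.indicator (1 : Ω → ℝ) := Set.indicator_nonneg fun _ _ => zero_le_one
  have hX : s.indicator 1 ∈ glrAcceptanceSet P m := by
    refine ⟨(integrable_const 1).indicator hs, ?_⟩
    simp only [max_eq_right (neg_nonpos.2 (hX0 _)), integral_zero, mul_zero]
    exact integral_nonneg hX0
  have hZX : (fun ω => Z ω * s.indicator 1 ω) = s.indicator Z := by
    funext ω
    by_cases h : ω ∈ s <;> simp [h]
  simpa only [hZX, integral_indicator hs] using H _ hX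

theorem measureReal_mul_setIntegral_le [IsFiniteMeasure P] (hm : -1 ≤ m) (hZ : Integrable Z P)
    (H : ∀ X ∈ glrAcceptanceSet P m, 0 ≤ ∫ ω, Z ω * X ω ∂P) {A B : Set Ω} (hA : MeasurableSet A)
    (hB : MeasurableSet B) (hAB : Disjoint A B) :
    P.real A * ∫ ω in B, Z ω ∂P ≤ (m + 1) * P.real B * ∫ ω in A, Z ω ∂P := by
  set a := (m + 1) * P.real B
  set b := P.real A
  have ha : 0 ≤ a := mul_nonneg (by linarith) measureReal_nonneg
  set X : Ω → ℝ := fun ω => A.indicator (fun _ => a) ω - B.indicator (fun _ => b) ω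
  have hXint : Integrable X P :=
    ((integrable_const a).indicator hA).sub ((integrable_const b).indicator hB)
  have hXneg : ∫ ω, max (-X ω) 0 ∂P = b * P.real B := by
    have hpt : ∀ ω, max (-X ω) 0 = B.indicator (fun _ => b) ω :=
      negPart_indicator_sub_indicator hAB ha measureReal_nonneg
    simp_rw [hpt]
    rw [integral_indicator_const _ hB, smul_eq_mul, mul_comm]
  have hXexp : ∫ ω, X ω ∂P = a * b - b * P.real B := by
    rw [integral_sub ((integrable_const a).indicator hA) ((integrable_const b).indicator hB),
      integral_indicator_const _ hA, integral_indicator_const _ hB, smul_eq_mul, smul_eq_mul]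
    ring
  have hZX : ∫ ω, Z ω * X ω ∂P = a * ∫ ω in A, Z ω ∂P - b * ∫ ω in B, Z ω ∂P := by
    have hpt : (fun ω => Z ω * X ω) = fun ω => a * A.indicator Z ω - b * B.indicator Z ω := by
      funext ω
      by_cases hωA : ω ∈ A <;> by_cases hωB : ω ∈ B <;> simp [X, hωA, hωB, mul_comm, mul_sub]
    rw [hpt, integral_sub ((hZ.indicator hA).const_mul a) ((hZ.indicator hB).const_mul b),
      integral_const_mul, integral_const_mul, integral_indicator hA, integral_indicator hB]
  have hacc : X ∈ glrAcceptanceSet P m := ⟨hXint, by rw [hXneg, hXexp]; simp only [a]; linarith⟩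
  have hZX_nonneg := H X hacc
  rw [hZX] at hZX_nonneg
  linarith

theorem ae_lt_or_ae_lt_of_mul_lt [IsFiniteMeasure P] (hm : 0 ≤ m) (hZm : Measurable Z)
    (hZ : Integrable Z P) (H : ∀ X ∈ glrAcceptanceSet P m, 0 ≤ ∫ ω, Z ω * X ω ∂P) {s t : ℝ}
    (hs : 0 ≤ s) (hst : (m + 1) * s < t) :
    (∀ᵐ ω ∂P, s < Z ω) ∨ ∀ᵐ ω ∂P, Z ω < t := by
  set A := {ω | Z ω ≤ s}
  set B := {ω | t ≤ Z ω}
  have hA : MeasurableSet A := measurableSet_le hZm measurable_const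
  have hB : MeasurableSet B := measurableSet_le measurable_const hZm
  have hAB : Disjoint A B := Set.disjoint_left.2 fun ω (h₁ : Z ω ≤ s) (h₂ : t ≤ Z ω) => by nlinarith
  have hIA : ∫ ω in A, Z ω ∂P ≤ s * P.real A := by
    calc ∫ ω in A, Z ω ∂P ≤ ∫ _ in A, s ∂P :=
          setIntegral_mono_on hZ.integrableOn (integrableOn_const (measure_ne_top P A)) hA
            fun _ h => h
      _ = s * P.real A := by rw [setIntegral_const, smul_eq_mul, mul_comm]
  have hIB : t * P.real B ≤ ∫ ω in B, Z ω ∂P :=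
    setIntegral_ge_of_const_le_real hB (measure_ne_top P B) (fun _ h => h) hZ.integrableOn
  have key := measureReal_mul_setIntegral_le (by linarith) hZ H hA hB hAB
  have hPA : 0 ≤ P.real A := measureReal_nonneg
  have hPB : 0 ≤ P.real B := measureReal_nonneg
  have hprod : P.real A * P.real B = 0 := by
    nlinarith [mul_le_mul_of_nonneg_left hIB hPA,
      mul_le_mul_of_nonneg_left hIA (mul_nonneg (by linarith : (0 : ℝ) ≤ m + 1) hPB)]
  rcases mul_eq_zero.1 hprod with h | h
  · left
    simpa [ae_iff, A] using (measureReal_eq_zero_iff (measure_ne_top P A)).1 h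
  · right
    simpa [ae_iff, B] using (measureReal_eq_zero_iff (measure_ne_top P B)).1 h

theorem exists_ae_bounds_of_forall_mem_glrAcceptanceSet [IsFiniteMeasure P] [NeZero P]
    (hm : 0 ≤ m) (hZ : MemLp Z ⊤ P) (H : ∀ X ∈ glrAcceptanceSet P m, 0 ≤ ∫ ω, Z ω * X ω ∂P) :
    ∃ c : ℝ, 0 ≤ c ∧ ∀ᵐ ω ∂P, c ≤ Z ω ∧ Z ω ≤ c * (m + 1) := by
  have hZint : Integrable Z P := hZ.integrable le_top
  set Z' := hZ.1.mk Z
  have hZZ' : Z =ᵐ[P] Z' := hZ.1.ae_eq_mk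
  have H' : ∀ X ∈ glrAcceptanceSet P m, 0 ≤ ∫ ω, Z' ω * X ω ∂P := fun X hX =>
    (H X hX).trans_eq (integral_congr_ae (hZZ'.mono fun ω h => by simp only [h]))
  refine exists_ae_bounds_of_ae_lt_or_ae_lt (by linarith) (ae_nonneg_of_forall_mem_glrAcceptanceSet
    hZint H) hZ.isBoundedUnder_le_of_top fun s t hs hst => ?_
  rcases ae_lt_or_ae_lt_of_mul_lt hm hZ.1.stronglyMeasurable_mk.measurable
    (hZint.congr hZZ') H' hs hst with h | h
  · exact .inl (by filter_upwards [h, hZZ'] with ω hω hω' using hω' ▸ hω)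
  · exact .inr (by filter_upwards [h, hZZ'] with ω hω hω' using hω' ▸ hω)

end Polar

/-- Polar of the Gain-to-Loss Ratio acceptance set `A^m = {X ∈ L¹ : E[X] ≥ m·E[X⁻]}` for a
real `m > 0`: a `Z ∈ L^∞` satisfies `E[Z·X] ≥ 0` for all `X ∈ A^m` iff there is a real
`c ≥ 0` with `c ≤ Z ≤ c(m+1)` `P`-a.s. -/
theorem GLR_acceptance_polar (P : Measure Ω) [IsProbabilityMeasure P]
    (m : ℝ) (hm : 0 < m) (Z : Ω → ℝ) (hZ : MemLp Z ⊤ P) :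
    (∀ X : Ω → ℝ, Integrable X P →
        m * ∫ ω, max (-X ω) 0 ∂P ≤ ∫ ω, X ω ∂P → 0 ≤ ∫ ω, Z ω * X ω ∂P) ↔
      ∃ c : ℝ, 0 ≤ c ∧ ∀ᵐ ω ∂P, c ≤ Z ω ∧ Z ω ≤ c * (m + 1) := by
  constructor
  · intro H
    exact exists_ae_bounds_of_forall_mem_glrAcceptanceSet hm.le hZ fun X hX => H X hX.1 hX.2
  · rintro ⟨c, hc0, hc⟩ X hX hacc
    exact integral_mul_nonneg_of_ae_bounds hZ.1 hc0 hc ⟨hX, hacc⟩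
end

section
/- Robust representation of the Gain-to-Loss Ratio: for every X ∈ L¹(Ω, F, P), GLR(X) = inf { (esssup Z)/(essinf Z) − 1 : Z ∈ L^∞(Ω, F, P), essinf Z > 0, E[Z·X] < 0 }, where the infimum over the empty set is +∞ and the equality holds in [0, ∞]. (This identity expresses that the unique minimal risk function of GLR is R(Z, s) = +∞ for s ≥ 0 and R(Z, s) = (esssup Z)/(essinf Z) − 1 for −∞ < s < 0.) -/
/-! Write `A = E[X⁺]` and `B = E[X⁻]`. For `Z ∈ L^∞` with `a = essinf Z`, `b = esssup Z`, the
pointwise bound `Z X ≥ a X⁺ - b X⁻` gives `E[Z X] ≥ a A - b B`; so an admissible `Z` forces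
`B > 0` and `b / a > A / B`. Conversely, the weights equal to `1` on `{X > 0}` and to `r` on
`{X ≤ 0}` are admissible for every `r > max (A / B) 1` and have `b / a ≤ r`. Hence both `GLR X`
and the infimum equal `∞` when `B = 0` and `(A / B - 1)⁺` when `B > 0`. -/

open MeasureTheory
open scoped ENNReal

variable {Ω : Type*} {m0 : MeasurableSpace Ω}

open Classical in
/-- The (static) Gain-to-Loss Ratio: `GLR(X) = E[X]/E[X⁻]` if `E[X] > 0` (with `c/0 = ∞`
for `c > 0`), `GLR(X) = +∞` if `X = 0` `P`-a.s., and `GLR(X) = 0` otherwise. -/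
noncomputable def GLR (P : Measure Ω) (X : Ω → ℝ) : ℝ≥0∞ :=
  if 0 < ∫ ω, X ω ∂P then
    ENNReal.ofReal (∫ ω, X ω ∂P) / ENNReal.ofReal (∫ ω, max (-X ω) 0 ∂P)
  else if X =ᵐ[P] (fun _ => 0) then ⊤
  else 0

open Filter

lemma ENNReal.le_ofReal_of_forall_lt {x : ℝ≥0∞} {c : ℝ}
    (h : ∀ t, c < t → 0 < t → x ≤ ENNReal.ofReal t) : x ≤ ENNReal.ofReal c := by
  refine le_of_forall_gt_imp_ge_of_dense fun y hy => ?_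
  rcases eq_or_ne y ⊤ with rfl | hy_top
  · exact le_top
  rw [← ENNReal.ofReal_toReal hy_top] at hy ⊢
  obtain ⟨hcy, hy_pos⟩ := ENNReal.ofReal_lt_ofReal_iff'.1 hy
  exact h _ hcy hy_pos

lemma mul_max_sub_mul_max_neg_le {a b z x : ℝ} (haz : a ≤ z) (hzb : z ≤ b) :
    a * max x 0 - b * max (-x) 0 ≤ z * x := by
  rcases le_total 0 x with hx | hx
  · rw [max_eq_left hx, max_eq_right (neg_nonpos.2 hx)]
    nlinarith
  · rw [max_eq_right hx, max_eq_left (neg_nonneg.2 hx)]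
    nlinarith

namespace MeasureTheory

variable {P : Measure Ω} {X Z : Ω → ℝ}

lemma MemLp.isBoundedUnder_abs (hZ : MemLp Z ⊤ P) :
    IsBoundedUnder (· ≤ ·) (ae P) fun ω => |Z ω| := by
  have := hZ.eLpNorm_lt_top
  rw [eLpNorm_exponent_top, eLpNormEssSup_lt_top_iff_isBoundedUnder] at this
  obtain ⟨C, hC⟩ := this
  refine ⟨C, eventually_map.2 ((eventually_map.1 hC).mono fun ω hω => ?_)⟩
  simpa [Real.norm_eq_abs] using NNReal.coe_le_coe.2 hω

lemma integral_eq_integral_max_sub_integral_max_neg (hX : Integrable X P) :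
    ∫ ω, X ω ∂P = ∫ ω, max (X ω) 0 ∂P - ∫ ω, max (-X ω) 0 ∂P := by
  simpa [Real.coe_toNNReal'] using integral_eq_integral_pos_part_sub_integral_neg_part hX

lemma integral_max_neg_eq_zero_iff (hX : Integrable X P) :
    ∫ ω, max (-X ω) 0 ∂P = 0 ↔ 0 ≤ᵐ[P] X := by
  rw [integral_eq_zero_iff_of_nonneg (fun ω => le_max_right (-X ω) 0) hX.neg_part]
  simp [EventuallyLE, EventuallyEq]

lemma le_integral_mul_of_memLp_top (hX : Integrable X P) (hZ : MemLp Z ⊤ P) :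
    essInf Z P * ∫ ω, max (X ω) 0 ∂P - essSup Z P * ∫ ω, max (-X ω) 0 ∂P
      ≤ ∫ ω, Z ω * X ω ∂P := by
  have hZ_bdd := isBoundedUnder_le_abs.1 hZ.isBoundedUnder_abs
  rw [← integral_const_mul, ← integral_const_mul, ← integral_sub
    (hX.pos_part.const_mul _) (hX.neg_part.const_mul _)]
  refine integral_mono_ae ((hX.pos_part.const_mul _).sub (hX.neg_part.const_mul _))
    (hX.mul_of_top_right hZ) ?_
  filter_upwards [ae_essInf_le hZ_bdd.2, ae_le_essSup hZ_bdd.1] with ω hinf hsup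
  exact mul_max_sub_mul_max_neg_le hinf hsup

noncomputable def gainLossWeight (X : Ω → ℝ) (s t : ℝ) : Ω → ℝ :=
  fun ω => if 0 < X ω then s else t

lemma gainLossWeight_mem_Icc {s t : ℝ} (hst : s ≤ t) (ω : Ω) :
    gainLossWeight X s t ω ∈ Set.Icc s t := by
  unfold gainLossWeight
  split_ifs <;> simp [hst]

lemma memLp_top_gainLossWeight (hX : AEStronglyMeasurable X P) {s t : ℝ} (hst : s ≤ t) :
    MemLp (gainLossWeight X s t) ⊤ P := by
  have hmeas : Measurable fun x : ℝ => if 0 < x then s else t :=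
    Measurable.ite measurableSet_Ioi measurable_const measurable_const
  refine memLp_top_of_bound (hmeas.comp_aemeasurable hX.aemeasurable).aestronglyMeasurable
    (max |s| |t|) (ae_of_all _ fun ω => ?_)
  obtain ⟨hs, ht⟩ := gainLossWeight_mem_Icc (X := X) hst ω
  exact abs_le_max_abs_abs hs ht

lemma integral_gainLossWeight_mul (hX : Integrable X P) (s t : ℝ) :
    ∫ ω, gainLossWeight X s t ω * X ω ∂P
      = s * ∫ ω, max (X ω) 0 ∂P - t * ∫ ω, max (-X ω) 0 ∂P := by
  have hpointwise (ω : Ω) :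
      gainLossWeight X s t ω * X ω = s * max (X ω) 0 - t * max (-X ω) 0 := by
    unfold gainLossWeight
    split_ifs with hx
    · rw [max_eq_left hx.le, max_eq_right (by linarith)]; ring
    · rw [max_eq_right (not_lt.1 hx), max_eq_left (by linarith)]; ring
  simp_rw [hpointwise]
  rw [integral_sub (hX.pos_part.const_mul s) (hX.neg_part.const_mul t), integral_const_mul,
    integral_const_mul]

variable [NeZero P]

lemma le_essInf_gainLossWeight {s t : ℝ} (hst : s ≤ t) :
    s ≤ essInf (gainLossWeight X s t) P :=
  have hbounds := gainLossWeight_mem_Icc (X := X) hst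
  le_essInf_of_ae_le s (ae_of_all _ fun ω => (hbounds ω).1)
    (isCoboundedUnder_ge_of_eventually_le _ (ae_of_all _ fun ω => (hbounds ω).2))

lemma essSup_gainLossWeight_le {s t : ℝ} (hst : s ≤ t) :
    essSup (gainLossWeight X s t) P ≤ t :=
  have hbounds := gainLossWeight_mem_Icc (X := X) hst
  essSup_le_of_ae_le t (ae_of_all _ fun ω => (hbounds ω).2)
    (isCoboundedUnder_le_of_eventually_le _ (ae_of_all _ fun ω => (hbounds ω).1))

end MeasureTheory

section GLR

variable {P : Measure Ω} {X : Ω → ℝ}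

lemma GLR_eq_top_of_integral_max_neg_eq_zero (hX : Integrable X P)
    (hB : ∫ ω, max (-X ω) 0 ∂P = 0) : GLR P X = ⊤ := by
  have hX_nonneg := (integral_max_neg_eq_zero_iff hX).1 hB
  unfold GLR
  split_ifs with hpos hzero
  · rw [hB, ENNReal.ofReal_zero, ENNReal.div_zero (ENNReal.ofReal_pos.2 hpos).ne']
  · rfl
  · exact absurd ((integral_eq_zero_iff_of_nonneg_ae hX_nonneg hX).1
      (le_antisymm (not_lt.1 hpos) (integral_nonneg_of_ae hX_nonneg))) hzero

lemma GLR_eq_ofReal_of_integral_max_neg_pos (hX : Integrable X P)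
    (hB : 0 < ∫ ω, max (-X ω) 0 ∂P) :
    GLR P X = ENNReal.ofReal ((∫ ω, max (X ω) 0 ∂P) / ∫ ω, max (-X ω) 0 ∂P - 1) := by
  have hsplit := integral_eq_integral_max_sub_integral_max_neg hX
  unfold GLR
  split_ifs with hpos hzero
  · rw [← ENNReal.ofReal_div_of_pos hB, hsplit, sub_div, div_self hB.ne']
  · exact absurd ((integral_max_neg_eq_zero_iff hX).2 hzero.symm.le) hB.ne'
  · refine (ENNReal.ofReal_of_nonpos ?_).symm
    rw [sub_nonpos, div_le_one hB]
    linarith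

noncomputable def robustGLR (P : Measure Ω) (X : Ω → ℝ) : ℝ≥0∞ :=
  ⨅ (Z : Ω → ℝ) (_ : MemLp Z ⊤ P) (_ : 0 < essInf Z P) (_ : ∫ ω, Z ω * X ω ∂P < 0),
    ENNReal.ofReal (essSup Z P / essInf Z P - 1)

lemma robustGLR_eq_top_of_integral_max_neg_eq_zero (hX : Integrable X P)
    (hB : ∫ ω, max (-X ω) 0 ∂P = 0) : robustGLR P X = ⊤ := by
  simp only [robustGLR, iInf_eq_top]
  intro Z hZ hinf hneg
  have hbound := le_integral_mul_of_memLp_top hX hZ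
  have hA : 0 ≤ essInf Z P * ∫ ω, max (X ω) 0 ∂P :=
    mul_nonneg hinf.le (integral_nonneg fun ω => le_max_right _ _)
  rw [hB, mul_zero, sub_zero] at hbound
  linarith

lemma ofReal_le_robustGLR (hX : Integrable X P) (hB : 0 < ∫ ω, max (-X ω) 0 ∂P) :
    ENNReal.ofReal ((∫ ω, max (X ω) 0 ∂P) / ∫ ω, max (-X ω) 0 ∂P - 1) ≤ robustGLR P X := by
  simp only [robustGLR, le_iInf_iff]
  intro Z hZ hinf hneg
  have hbound := le_integral_mul_of_memLp_top hX hZ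
  refine ENNReal.ofReal_le_ofReal (sub_le_sub_right ?_ 1)
  rw [div_le_div_iff₀ hB hinf]
  linarith

lemma robustGLR_le_ofReal (hX : Integrable X P) (hB : 0 < ∫ ω, max (-X ω) 0 ∂P) :
    robustGLR P X ≤ ENNReal.ofReal ((∫ ω, max (X ω) 0 ∂P) / ∫ ω, max (-X ω) 0 ∂P - 1) := by
  have : NeZero P := ⟨by rintro rfl; simp at hB⟩
  refine ENNReal.le_ofReal_of_forall_lt fun t ht ht_pos => ?_
  set Z := gainLossWeight X 1 (t + 1)
  have hst : (1 : ℝ) ≤ t + 1 := by linarith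
  have hinf : 1 ≤ essInf Z P := le_essInf_gainLossWeight hst
  have hsup : essSup Z P ≤ t + 1 := essSup_gainLossWeight_le hst
  have hneg : ∫ ω, Z ω * X ω ∂P < 0 := by
    rw [integral_gainLossWeight_mul hX, one_mul, sub_neg, ← div_lt_iff₀ hB]
    linarith
  calc robustGLR P X ≤ ENNReal.ofReal (essSup Z P / essInf Z P - 1) :=
        iInf₂_le_of_le Z (memLp_top_gainLossWeight hX.aestronglyMeasurable hst) <|
          iInf₂_le (by linarith) hneg
    _ ≤ ENNReal.ofReal t := by
        refine ENNReal.ofReal_le_ofReal ?_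
        rw [sub_le_iff_le_add, div_le_iff₀ (by linarith)]
        nlinarith

end GLR

theorem GLR_robust_representation_general (P : Measure Ω)
    (X : Ω → ℝ) (hX : Integrable X P) :
    GLR P X = ⨅ (Z : Ω → ℝ) (_ : MemLp Z ⊤ P) (_ : 0 < essInf Z P)
        (_ : ∫ ω, Z ω * X ω ∂P < 0),
      ENNReal.ofReal (essSup Z P / essInf Z P - 1) := by
  change GLR P X = robustGLR P X
  rcases (integral_nonneg fun ω => le_max_right (-X ω) 0 : 0 ≤ ∫ ω, max (-X ω) 0 ∂P).eq_or_lt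
    with hB | hB
  · rw [GLR_eq_top_of_integral_max_neg_eq_zero hX hB.symm,
      robustGLR_eq_top_of_integral_max_neg_eq_zero hX hB.symm]
  · rw [GLR_eq_ofReal_of_integral_max_neg_pos hX hB]
    exact le_antisymm (ofReal_le_robustGLR hX hB) (robustGLR_le_ofReal hX hB)

/-- Robust representation of the Gain-to-Loss Ratio: for every `X ∈ L¹`,
`GLR(X) = inf { esssup Z / essinf Z - 1 : Z ∈ L^∞, essinf Z > 0, E[Z·X] < 0 }`,
the infimum over the empty set being `+∞` and the equality holding in `[0,∞]`. -/
theorem GLR_robust_representation (P : Measure Ω) [IsProbabilityMeasure P]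
    (X : Ω → ℝ) (hX : Integrable X P) :
    GLR P X = ⨅ (Z : Ω → ℝ) (_ : MemLp Z ⊤ P) (_ : 0 < essInf Z P)
        (_ : ∫ ω, Z ω * X ω ∂P < 0),
      ENNReal.ofReal (essSup Z P / essInf Z P - 1) :=
  GLR_robust_representation_general P X hX
end

section
/- Let F : M → M be local, increasing, and respect a.e. equality, and let G_l and G_r be a conditional left-inverse and a conditional right-inverse of F, respectively. Then G_l and G_r are local, increasing, and respect a.e. equality; moreover G_l is left-continuous, i.e. for every s ∈ M, on the event {s > −∞} the function G_l(s) agrees P-a.e. with an essential supremum of { G_l(s′) : s′ ∈ M, s′ < s a.e. on {s > −∞} }, and G_r is right-continuous, i.e. for every s ∈ M, on {s < +∞} the function G_r(s) agrees P-a.e. with an essential infimum of { G_r(s′) : s′ ∈ M, s′ > s a.e. on {s < +∞} }. -/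
open MeasureTheory

variable {Ω : Type*} [MeasurableSpace Ω]

/-- `M`: the measurable functions `Ω → [-∞, ∞]`. -/
def MSp (Ω : Type*) [MeasurableSpace Ω] : Type _ := {f : Ω → EReal // Measurable f}

/-- The constant function `+∞` as an element of `M`. -/
noncomputable def MSp.mtop (Ω : Type*) [MeasurableSpace Ω] : MSp Ω := ⟨fun _ => ⊤, measurable_const⟩

/-- The constant function `-∞` as an element of `M`. -/
noncomputable def MSp.mbot (Ω : Type*) [MeasurableSpace Ω] : MSp Ω := ⟨fun _ => ⊥, measurable_const⟩

open Classical in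
/-- The pointwise piecewise combination `1_A f + 1_{Aᶜ} g`. -/
noncomputable def pcf (A : Set Ω) (f g : Ω → EReal) : Ω → EReal :=
  fun ω => if ω ∈ A then f ω else g ω

/-- The piecewise combination `1_A m + 1_{Aᶜ} n` as an element of `M`. -/
noncomputable def MSp.pc (A : Set Ω) (hA : MeasurableSet A) (m n : MSp Ω) : MSp Ω :=
  ⟨pcf A m.1 n.1, by classical unfold pcf; exact Measurable.ite hA m.2 n.2⟩

/-- `F : M → M` respects `P`-a.e. equality. -/
def RespectsAE (P : Measure Ω) (F : MSp Ω → MSp Ω) : Prop :=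
  ∀ m n : MSp Ω, m.1 =ᵐ[P] n.1 → (F m).1 =ᵐ[P] (F n).1

/-- `F : M → M` is increasing with respect to the `P`-a.e. order. -/
def IncreasingAE (P : Measure Ω) (F : MSp Ω → MSp Ω) : Prop :=
  ∀ m n : MSp Ω, m.1 ≤ᵐ[P] n.1 → (F m).1 ≤ᵐ[P] (F n).1

/-- `F : M → M` is local: `F(1_A m + 1_{Aᶜ} n) = 1_A F(m) + 1_{Aᶜ} F(n)` a.e. -/
def LocalAE (P : Measure Ω) (F : MSp Ω → MSp Ω) : Prop :=
  ∀ (A : Set Ω) (hA : MeasurableSet A) (m n : MSp Ω),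
    (F (MSp.pc A hA m n)).1 =ᵐ[P] pcf A (F m).1 (F n).1

/-- `g` is an essential infimum of the set `S ⊆ M`. -/
def IsEssInfM (P : Measure Ω) (S : Set (MSp Ω)) (g : MSp Ω) : Prop :=
  (∀ f ∈ S, g.1 ≤ᵐ[P] f.1) ∧ ∀ h : MSp Ω, (∀ f ∈ S, h.1 ≤ᵐ[P] f.1) → h.1 ≤ᵐ[P] g.1

/-- `g` is an essential supremum of the set `S ⊆ M`. -/
def IsEssSupM (P : Measure Ω) (S : Set (MSp Ω)) (g : MSp Ω) : Prop :=
  (∀ f ∈ S, f.1 ≤ᵐ[P] g.1) ∧ ∀ h : MSp Ω, (∀ f ∈ S, f.1 ≤ᵐ[P] h.1) → g.1 ≤ᵐ[P] h.1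

/-- `Gl` is a conditional left-inverse of `F`: writing `A_s = {F(+∞) ≥ s}`, one has
`Gl(s) = +∞` a.e. on `A_sᶜ` and, on `A_s`, `Gl(s)` agrees a.e. with an essential infimum
of `{ m ∈ M : F(m) ≥ s a.e. on A_s }`. -/
def IsCondLeftInv (P : Measure Ω) (F Gl : MSp Ω → MSp Ω) : Prop :=
  ∀ s : MSp Ω,
    (∀ᵐ ω ∂P, ω ∉ {ω' | s.1 ω' ≤ (F (MSp.mtop Ω)).1 ω'} → (Gl s).1 ω = ⊤) ∧
    ∃ g : MSp Ω,
      IsEssInfM P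
        {m : MSp Ω | ∀ᵐ ω ∂P, ω ∈ {ω' | s.1 ω' ≤ (F (MSp.mtop Ω)).1 ω'} →
          s.1 ω ≤ (F m).1 ω} g ∧
      ∀ᵐ ω ∂P, ω ∈ {ω' | s.1 ω' ≤ (F (MSp.mtop Ω)).1 ω'} → (Gl s).1 ω = g.1 ω

/-- `Gr` is a conditional right-inverse of `F`: writing `B_s = {F(-∞) ≤ s}`, one has
`Gr(s) = -∞` a.e. on `B_sᶜ` and, on `B_s`, `Gr(s)` agrees a.e. with an essential supremum
of `{ m ∈ M : F(m) ≤ s a.e. on B_s }`. -/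
def IsCondRightInv (P : Measure Ω) (F Gr : MSp Ω → MSp Ω) : Prop :=
  ∀ s : MSp Ω,
    (∀ᵐ ω ∂P, ω ∉ {ω' | (F (MSp.mbot Ω)).1 ω' ≤ s.1 ω'} → (Gr s).1 ω = ⊥) ∧
    ∃ g : MSp Ω,
      IsEssSupM P
        {m : MSp Ω | ∀ᵐ ω ∂P, ω ∈ {ω' | (F (MSp.mbot Ω)).1 ω' ≤ s.1 ω'} →
          (F m).1 ω ≤ s.1 ω} g ∧
      ∀ᵐ ω ∂P, ω ∈ {ω' | (F (MSp.mbot Ω)).1 ω' ≤ s.1 ω'} → (Gr s).1 ω = g.1 ω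

/-- `Fm` is a left-continuous version of `F`: `Fm(m) = -∞` a.e. on `{m = -∞}` and, on
`{m > -∞}`, `Fm(m)` agrees a.e. with an essential supremum of
`{ F(n) : n < m a.e. on {m > -∞} }`. -/
def IsLeftContVersion (P : Measure Ω) (F Fm : MSp Ω → MSp Ω) : Prop :=
  ∀ m : MSp Ω,
    (∀ᵐ ω ∂P, m.1 ω = ⊥ → (Fm m).1 ω = ⊥) ∧
    ∃ g : MSp Ω,
      IsEssSupM P
        (F '' {n : MSp Ω | ∀ᵐ ω ∂P, ω ∈ {ω' | ⊥ < m.1 ω'} → n.1 ω < m.1 ω}) g ∧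
      ∀ᵐ ω ∂P, ω ∈ {ω' | ⊥ < m.1 ω'} → (Fm m).1 ω = g.1 ω

/-- `Fp` is a right-continuous version of `F`: `Fp(m) = +∞` a.e. on `{m = +∞}` and, on
`{m < +∞}`, `Fp(m)` agrees a.e. with an essential infimum of
`{ F(n) : n > m a.e. on {m < +∞} }`. -/
def IsRightContVersion (P : Measure Ω) (F Fp : MSp Ω → MSp Ω) : Prop :=
  ∀ m : MSp Ω,
    (∀ᵐ ω ∂P, m.1 ω = ⊤ → (Fp m).1 ω = ⊤) ∧
    ∃ g : MSp Ω,
      IsEssInfM P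
        (F '' {n : MSp Ω | ∀ᵐ ω ∂P, ω ∈ {ω' | m.1 ω' < ⊤} → m.1 ω < n.1 ω}) g ∧
      ∀ᵐ ω ∂P, ω ∈ {ω' | m.1 ω' < ⊤} → (Fp m).1 ω = g.1 ω

/-! A conditional left-inverse is a local Galois adjoint of `F`: on any event, `s ≤ F m` forces
`Gl s ≤ m`, and `F m < s` forces `m ≤ Gl s` (a local increasing map reflects strict
inequalities). Comparing the essential infima that define `Gl s₁` and `Gl s₂` on pieces of `Ω`
gives monotonicity and locality. For left-continuity, if `h` dominates all `Gl s'` with `s' < s`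
but `h < Gl s` on some event, pick `x` strictly in between there; the first inequality forces
`F x < s`, and then an `s'` strictly between `F x` and `s` gives `x ≤ Gl s' ≤ h`, a contradiction.
Conjugation by `m ↦ -m` exchanges right- and left-inverses, which yields the claims for `Gr`. -/

omit [MeasurableSpace Ω] in
theorem pcf_of_mem {A : Set Ω} {f g : Ω → EReal} {ω : Ω} (h : ω ∈ A) : pcf A f g ω = f ω :=
  if_pos h

omit [MeasurableSpace Ω] in
theorem pcf_of_notMem {A : Set Ω} {f g : Ω → EReal} {ω : Ω} (h : ω ∉ A) : pcf A f g ω = g ω :=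
  if_neg h

namespace MSp

instance : CoeFun (MSp Ω) (fun _ => Ω → EReal) := ⟨Subtype.val⟩

variable {A : Set Ω} (hA : MeasurableSet A) (m n : MSp Ω) {ω : Ω}

theorem pc_of_mem (h : ω ∈ A) : pc A hA m n ω = m ω := pcf_of_mem h

theorem pc_of_notMem (h : ω ∉ A) : pc A hA m n ω = n ω := pcf_of_notMem h

theorem exists_between (f g : MSp Ω) :
    ∃ m : MSp Ω, ∀ ω, f ω < g ω → f ω < m ω ∧ m ω < g ω := by
  classical
  obtain ⟨q, hq⟩ := exists_surjective_nat ℚ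
  let between : ℕ → Ω → Prop := fun n ω => f ω < g ω → f ω < (q n : ℝ) ∧ ((q n : ℝ) : EReal) < g ω
  have hex : ∀ ω, ∃ n, between n ω := by
    intro ω
    by_cases hfg : f ω < g ω
    · obtain ⟨r, hr⟩ := EReal.exists_rat_btwn_of_lt hfg
      obtain ⟨n, rfl⟩ := hq r
      exact ⟨n, fun _ => hr⟩
    · exact ⟨0, fun h => absurd h hfg⟩
  have hmeas : ∀ n, MeasurableSet {ω | between n ω} := fun n =>
    (measurableSet_lt f.2 g.2).imp
      ((measurableSet_lt f.2 measurable_const).inter (measurableSet_lt measurable_const g.2))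
  exact ⟨⟨fun ω => ((q (Nat.find (hex ω)) : ℝ) : EReal),
    Measurable.find (f := fun n _ => ((q n : ℝ) : EReal)) (fun _ => measurable_const) hmeas hex⟩,
    fun ω => Nat.find_spec (hex ω)⟩

end MSp

open MSp

variable {P : Measure Ω} {F : MSp Ω → MSp Ω}

theorem IncreasingAE.respectsAE (hF : IncreasingAE P F) : RespectsAE P F := fun m n hmn =>
  (hF m n hmn.le).antisymm (hF n m hmn.symm.le)

theorem IsEssInfM.le_on {S : Set (MSp Ω)} {g m : MSp Ω} (hg : IsEssInfM P S g) {D : Set Ω}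
    (hD : MeasurableSet D) (h : ∀ f ∈ S, ∀ᵐ ω ∂P, ω ∈ D → m ω ≤ f ω) :
    ∀ᵐ ω ∂P, ω ∈ D → m ω ≤ g ω := by
  have hlow : (pc D hD m (mbot Ω)).1 ≤ᵐ[P] g.1 := hg.2 _ fun f hf => by
    filter_upwards [h f hf] with ω hmf
    by_cases hω : ω ∈ D
    · rw [pc_of_mem hD m _ hω]
      exact hmf hω
    · exact (pc_of_notMem hD m _ hω).trans_le bot_le
  filter_upwards [hlow] with ω hmg hω
  rwa [pc_of_mem hD m _ hω] at hmg

namespace LocalAE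

variable (hF : LocalAE P F) {A : Set Ω} (hA : MeasurableSet A) (m n : MSp Ω)
include hF

theorem apply_pc_of_mem : ∀ᵐ ω ∂P, ω ∈ A → F (pc A hA m n) ω = F m ω := by
  filter_upwards [hF A hA m n] with ω h hω
  rw [h, pcf_of_mem hω]

theorem apply_pc_of_notMem : ∀ᵐ ω ∂P, ω ∉ A → F (pc A hA m n) ω = F n ω := by
  filter_upwards [hF A hA m n] with ω h hω
  rw [h, pcf_of_notMem hω]

omit hA m n in
/-- On `{n < m}` the patched function `1_{n < m} n + 1_{n ≥ m} m ≤ m` has image `F n`, so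
`F n ≤ F m` there. -/
theorem le_on_of_apply_lt (hFinc : IncreasingAE P F) {D : Set Ω} (hD : MeasurableSet D)
    {m n : MSp Ω} (h : ∀ᵐ ω ∂P, ω ∈ D → F m ω < F n ω) : ∀ᵐ ω ∂P, ω ∈ D → m ω ≤ n ω := by
  have hE : MeasurableSet (D ∩ {ω | n ω < m ω}) := hD.inter (measurableSet_lt n.2 m.2)
  have hle : (pc _ hE n m).1 ≤ᵐ[P] m.1 := Filter.Eventually.of_forall fun ω => by
    by_cases hω : ω ∈ D ∩ {ω | n ω < m ω}
    · exact (pc_of_mem hE n m hω).trans_le hω.2.le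
    · exact (pc_of_notMem hE n m hω).le
  filter_upwards [hFinc _ _ hle, hF.apply_pc_of_mem hE n m, h] with ω hFle hFeq hlt hω
  by_contra hnm
  have hωE : ω ∈ D ∩ {ω | n ω < m ω} := ⟨hω, not_le.1 hnm⟩
  exact not_lt.2 ((hFeq hωE).symm.trans_le hFle) (hlt hω)

end LocalAE

/-- The event `A_s` in the definition of a conditional left-inverse. -/
def attainSet (F : MSp Ω → MSp Ω) (s : MSp Ω) : Set Ω := {ω | s ω ≤ F (mtop Ω) ω}

theorem measurableSet_attainSet (F : MSp Ω → MSp Ω) (s : MSp Ω) :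
    MeasurableSet (attainSet F s) :=
  measurableSet_le s.2 (F _).2

def IsLeftContinuousAE (P : Measure Ω) (G : MSp Ω → MSp Ω) : Prop :=
  ∀ s : MSp Ω, ∃ g : MSp Ω,
    IsEssSupM P (G '' {s' | ∀ᵐ ω ∂P, ⊥ < s ω → s' ω < s ω}) g ∧ ∀ᵐ ω ∂P, ⊥ < s ω → G s ω = g ω

def IsRightContinuousAE (P : Measure Ω) (G : MSp Ω → MSp Ω) : Prop :=
  ∀ s : MSp Ω, ∃ g : MSp Ω,
    IsEssInfM P (G '' {s' | ∀ᵐ ω ∂P, s ω < ⊤ → s ω < s' ω}) g ∧ ∀ᵐ ω ∂P, s ω < ⊤ → G s ω = g ω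

namespace IsCondLeftInv

variable {Gl : MSp Ω → MSp Ω} (hGl : IsCondLeftInv P F Gl)
include hGl

theorem le_apply_of_forall_le {D : Set Ω} (hD : MeasurableSet D) {s m : MSp Ω}
    (h : ∀ n : MSp Ω, (∀ᵐ ω ∂P, ω ∈ D ∩ attainSet F s → s ω ≤ F n ω) →
      ∀ᵐ ω ∂P, ω ∈ D ∩ attainSet F s → m ω ≤ n ω) :
    ∀ᵐ ω ∂P, ω ∈ D → m ω ≤ Gl s ω := by
  obtain ⟨hGltop, g, hg, hGlg⟩ := hGl s
  have hmg := hg.le_on (hD.inter (measurableSet_attainSet F s)) fun n hn =>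
    h n (by filter_upwards [hn] with ω hn hω using hn hω.2)
  filter_upwards [hmg, hGltop, hGlg] with ω hmg hGltop hGlg hω
  by_cases hωs : ω ∈ attainSet F s
  · exact (hmg ⟨hω, hωs⟩).trans_eq (hGlg hωs).symm
  · exact le_top.trans_eq (hGltop hωs).symm

variable (hFloc : LocalAE P F) (hFinc : IncreasingAE P F)
include hFloc hFinc

theorem apply_le_of_le_apply {D : Set Ω} (hD : MeasurableSet D) {s m : MSp Ω}
    (h : ∀ᵐ ω ∂P, ω ∈ D → s ω ≤ F m ω) :
    ∀ᵐ ω ∂P, ω ∈ D → Gl s ω ≤ m ω := by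
  obtain ⟨-, g, hg, hGlg⟩ := hGl s
  have hmem : pc D hD m (mtop Ω) ∈ {n : MSp Ω | ∀ᵐ ω ∂P, ω ∈ attainSet F s → s ω ≤ F n ω} := by
    filter_upwards [hFloc.apply_pc_of_mem hD m (mtop Ω), hFloc.apply_pc_of_notMem hD m (mtop Ω),
      h] with ω hin hout hsm hω
    by_cases hωD : ω ∈ D
    · exact (hsm hωD).trans_eq (hin hωD).symm
    · exact hω.trans_eq (hout hωD).symm
  filter_upwards [hg.1 _ hmem, hGlg, hFinc m (mtop Ω) (Filter.Eventually.of_forall fun _ => le_top),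
    h] with ω hgm hGlg hFm hsm hω
  rw [hGlg ((hsm hω).trans hFm), ← pc_of_mem hD m (mtop Ω) hω]
  exact hgm

theorem apply_le_apply_on {A : Set Ω} (hA : MeasurableSet A) {s₁ s₂ : MSp Ω}
    (h : ∀ᵐ ω ∂P, ω ∈ A → s₁ ω ≤ s₂ ω) : ∀ᵐ ω ∂P, ω ∈ A → Gl s₁ ω ≤ Gl s₂ ω :=
  hGl.le_apply_of_forall_le hA fun _ hn =>
    hGl.apply_le_of_le_apply hFloc hFinc (hA.inter (measurableSet_attainSet F s₂)) (by
      filter_upwards [h, hn] with ω h hn hω using (h hω.1).trans (hn hω))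

theorem apply_eq_apply_on {A : Set Ω} (hA : MeasurableSet A) {s₁ s₂ : MSp Ω}
    (h : ∀ᵐ ω ∂P, ω ∈ A → s₁ ω = s₂ ω) : ∀ᵐ ω ∂P, ω ∈ A → Gl s₁ ω = Gl s₂ ω := by
  filter_upwards [hGl.apply_le_apply_on hFloc hFinc hA (h.mono fun ω h hω => (h hω).le),
    hGl.apply_le_apply_on hFloc hFinc hA (h.mono fun ω h hω => (h hω).ge)] with ω h₁₂ h₂₁ hω
  exact (h₁₂ hω).antisymm (h₂₁ hω)

theorem increasingAE : IncreasingAE P Gl := fun _ _ h =>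
  (hGl.apply_le_apply_on hFloc hFinc MeasurableSet.univ (h.mono fun _ h _ => h)).mono
    fun _ h => h trivial

theorem localAE : LocalAE P Gl := by
  intro A hA m n
  filter_upwards [hGl.apply_eq_apply_on hFloc hFinc hA (.of_forall fun _ => pc_of_mem hA m n),
    hGl.apply_eq_apply_on hFloc hFinc hA.compl (.of_forall fun _ => pc_of_notMem hA m n)]
    with ω hm hn
  by_cases hω : ω ∈ A
  · rw [pcf_of_mem hω]; exact hm hω
  · rw [pcf_of_notMem hω]; exact hn hω

theorem le_apply_of_apply_lt {D : Set Ω} (hD : MeasurableSet D) {s m : MSp Ω}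
    (h : ∀ᵐ ω ∂P, ω ∈ D → F m ω < s ω) : ∀ᵐ ω ∂P, ω ∈ D → m ω ≤ Gl s ω :=
  hGl.le_apply_of_forall_le hD fun _ hn =>
    hFloc.le_on_of_apply_lt hFinc (hD.inter (measurableSet_attainSet F s)) (by
      filter_upwards [h, hn] with ω h hn hω using (h hω.1).trans_le (hn hω))

theorem apply_le_of_forall_lt {s h : MSp Ω}
    (hh : ∀ s' : MSp Ω, (∀ᵐ ω ∂P, ⊥ < s ω → s' ω < s ω) → (Gl s').1 ≤ᵐ[P] h.1) :
    ∀ᵐ ω ∂P, ⊥ < s ω → Gl s ω ≤ h ω := by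
  set B := {ω | ⊥ < s ω} ∩ {ω | h ω < Gl s ω}
  have hB : MeasurableSet B :=
    (measurableSet_lt measurable_const s.2).inter (measurableSet_lt h.2 (Gl s).2)
  obtain ⟨x, hx⟩ := MSp.exists_between h (Gl s)
  have hFx : ∀ᵐ ω ∂P, ω ∈ B → F x ω < s ω := by
    filter_upwards [hGl.apply_le_of_le_apply hFloc hFinc (hB.inter (measurableSet_le s.2 (F x).2))
      (m := x) (.of_forall fun _ hω => hω.2)] with ω hGlx hω
    by_contra hsx
    exact not_lt.2 (hGlx ⟨hω, not_lt.1 hsx⟩) (hx ω hω.2).2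
  obtain ⟨y, hy⟩ := MSp.exists_between (F x) s
  have hys : ∀ᵐ ω ∂P, ⊥ < s ω → pc B hB y (mbot Ω) ω < s ω := by
    filter_upwards [hFx] with ω hFx hω
    by_cases hωB : ω ∈ B
    · exact (pc_of_mem hB y _ hωB).trans_lt (hy ω (hFx hωB)).2
    · exact (pc_of_notMem hB y _ hωB).trans_lt hω
  have hxy : ∀ᵐ ω ∂P, ω ∈ B → x ω ≤ Gl (pc B hB y (mbot Ω)) ω :=
    hGl.le_apply_of_apply_lt hFloc hFinc hB (by
      filter_upwards [hFx] with ω hFx hωB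
      exact (hy ω (hFx hωB)).1.trans_eq (pc_of_mem hB y _ hωB).symm)
  filter_upwards [hxy, hh _ hys] with ω hxy hyh hω
  by_contra hlt
  have hωB : ω ∈ B := ⟨hω, not_le.1 hlt⟩
  exact lt_irrefl _ ((hx ω hωB.2).1.trans_le ((hxy hωB).trans hyh))

/-- The essential supremum is `Gl (1_{s > -∞} s + 1_{s = -∞} ∞)`. -/
theorem isLeftContinuousAE : IsLeftContinuousAE P Gl := by
  intro s
  have hC : MeasurableSet {ω | ⊥ < s ω} := measurableSet_lt measurable_const s.2
  set t := pc _ hC s (mtop Ω)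
  set b := pc _ hC (mbot Ω) (mtop Ω)
  have hst : ∀ᵐ ω ∂P, ω ∈ {ω | ⊥ < s ω} → Gl s ω = Gl t ω :=
    hGl.apply_eq_apply_on hFloc hFinc hC (.of_forall fun _ hω => (pc_of_mem hC s _ hω).symm)
  have hbt : ∀ᵐ ω ∂P, ω ∈ {ω | ⊥ < s ω}ᶜ → Gl b ω = Gl t ω :=
    hGl.apply_eq_apply_on hFloc hFinc hC.compl (.of_forall fun _ hω =>
      (pc_of_notMem hC _ _ hω).trans (pc_of_notMem hC s _ hω).symm)
  refine ⟨Gl t, ⟨?_, fun h hh => ?_⟩, hst⟩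
  · rintro _ ⟨s', hs', rfl⟩
    apply hGl.increasingAE hFloc hFinc
    filter_upwards [hs'] with ω hs'
    by_cases hω : ⊥ < s ω
    · exact (hs' hω).le.trans_eq (pc_of_mem hC s _ hω).symm
    · exact le_top.trans_eq (pc_of_notMem hC s (mtop Ω) hω).symm
  have hb : (Gl b).1 ≤ᵐ[P] h.1 :=
    hh _ ⟨b, show ∀ᵐ ω ∂P, ⊥ < s ω → b ω < s ω from
      .of_forall fun _ hω => (pc_of_mem hC (mbot Ω) (mtop Ω) hω).trans_lt hω, rfl⟩
  filter_upwards [hGl.apply_le_of_forall_lt hFloc hFinc fun s' hs' => hh _ ⟨s', hs', rfl⟩,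
    hst, hbt, hb] with ω hsh hst hbt hb
  by_cases hω : ⊥ < s ω
  · exact (hst hω).symm.trans_le (hsh hω)
  · exact (hbt hω).symm.trans_le hb

end IsCondLeftInv

namespace MSp

noncomputable instance : InvolutiveNeg (MSp Ω) where
  neg m := ⟨fun ω => -m ω, m.2.neg⟩
  neg_neg m := Subtype.ext (funext fun ω => neg_neg (m ω))

theorem neg_apply (m : MSp Ω) (ω : Ω) : (-m) ω = -m ω := rfl

theorem neg_mtop : -mtop Ω = mbot Ω := Subtype.ext (funext fun _ => EReal.neg_top)

theorem neg_pc {A : Set Ω} (hA : MeasurableSet A) (m n : MSp Ω) :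
    -pc A hA m n = pc A hA (-m) (-n) := by
  refine Subtype.ext (funext fun ω => ?_)
  change -pc A hA m n ω = pc A hA (-m) (-n) ω
  by_cases hω : ω ∈ A
  · rw [pc_of_mem hA m n hω, pc_of_mem hA (-m) (-n) hω, MSp.neg_apply]
  · rw [pc_of_notMem hA m n hω, pc_of_notMem hA (-m) (-n) hω, MSp.neg_apply]

end MSp

noncomputable def negConj (F : MSp Ω → MSp Ω) : MSp Ω → MSp Ω := fun m => -F (-m)

theorem negConj_negConj (F : MSp Ω → MSp Ω) : negConj (negConj F) = F :=
  funext fun m => by simp only [negConj, neg_neg]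

theorem LocalAE.negConj (hF : LocalAE P F) : LocalAE P (negConj F) := by
  intro A hA m n
  filter_upwards [hF A hA (-m) (-n)] with ω h
  change -F (-pc A hA m n) ω = _
  rw [neg_pc, h]
  by_cases hω : ω ∈ A
  · rw [pcf_of_mem hω, pcf_of_mem hω]; rfl
  · rw [pcf_of_notMem hω, pcf_of_notMem hω]; rfl

theorem IncreasingAE.negConj (hF : IncreasingAE P F) : IncreasingAE P (negConj F) :=
  fun m n hmn => by
    filter_upwards [hF (-n) (-m) (hmn.mono fun _ h => EReal.neg_le_neg_iff.2 h)] with ω h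
    exact EReal.neg_le_neg_iff.2 h

theorem IsEssSupM.isEssInfM_neg {S T : Set (MSp Ω)} {g : MSp Ω} (hg : IsEssSupM P S g)
    (hST : ∀ m, m ∈ T ↔ -m ∈ S) : IsEssInfM P T (-g) := by
  refine ⟨fun f hf => ?_, fun h hh => ?_⟩
  · filter_upwards [hg.1 _ ((hST f).1 hf)] with ω hfg
    exact EReal.neg_le.1 hfg
  · have hgh : g.1 ≤ᵐ[P] (-h).1 := hg.2 (-h) fun f hf => by
      filter_upwards [hh (-f) ((hST _).2 (by rwa [neg_neg]))] with ω hhf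
      exact EReal.le_neg.1 hhf
    filter_upwards [hgh] with ω hgh
    exact EReal.le_neg.1 hgh

theorem IsCondRightInv.isCondLeftInv_negConj {Gr : MSp Ω → MSp Ω}
    (hGr : IsCondRightInv P F Gr) : IsCondLeftInv P (negConj F) (negConj Gr) := by
  intro s
  obtain ⟨hGrbot, g, hg, hGrg⟩ := hGr (-s)
  have hset : ∀ ω, s ω ≤ negConj F (mtop Ω) ω ↔ F (mbot Ω) ω ≤ (-s) ω := fun ω => by
    rw [negConj, neg_mtop]
    exact EReal.le_neg
  refine ⟨?_, -g, hg.isEssInfM_neg fun m => ?_, ?_⟩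
  · filter_upwards [hGrbot] with ω h hω
    change -Gr (-s) ω = ⊤
    rw [h (mt (hset ω).2 hω), EReal.neg_bot]
  · rw [Set.mem_ofPred_eq, Set.mem_ofPred_eq]
    exact Filter.eventually_congr (.of_forall fun ω => imp_congr (hset ω) EReal.le_neg)
  · filter_upwards [hGrg] with ω h hω
    change -Gr (-s) ω = -g ω
    rw [h ((hset ω).1 hω)]

theorem isRightContinuousAE_of_negConj {G : MSp Ω → MSp Ω}
    (hG : IsLeftContinuousAE P (negConj G)) : IsRightContinuousAE P G := by
  intro s
  obtain ⟨g, hg, hGg⟩ := hG (-s)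
  have hdom : ∀ ω, ⊥ < (-s) ω ↔ s ω < ⊤ := fun ω => by
    rw [MSp.neg_apply, ← EReal.neg_top]
    exact EReal.neg_lt_neg_iff
  refine ⟨-g, hg.isEssInfM_neg fun m => ⟨?_, ?_⟩, ?_⟩
  · rintro ⟨s', hs', rfl⟩
    refine ⟨-s', ?_, by rw [negConj, neg_neg]⟩
    rw [Set.mem_ofPred_eq]
    filter_upwards [hs'] with ω h hω
    exact EReal.neg_lt_neg_iff.2 (h ((hdom ω).1 hω))
  · rintro ⟨s', hs', hm⟩
    refine ⟨-s', ?_, neg_injective hm⟩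
    rw [Set.mem_ofPred_eq]
    filter_upwards [hs'] with ω h hω
    exact EReal.lt_neg_comm.1 (h ((hdom ω).2 hω))
  · filter_upwards [hGg] with ω h hω
    have hGs : -G (-(-s)) ω = g ω := h ((hdom ω).2 hω)
    rw [neg_neg] at hGs
    rw [MSp.neg_apply, ← hGs, neg_neg]

theorem condInverse_basic_properties_general (P : Measure Ω)
    (F Gl Gr : MSp Ω → MSp Ω)
    (hFloc : LocalAE P F) (hFinc : IncreasingAE P F)
    (hGl : IsCondLeftInv P F Gl) (hGr : IsCondRightInv P F Gr) :
    LocalAE P Gl ∧ IncreasingAE P Gl ∧ RespectsAE P Gl ∧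
    LocalAE P Gr ∧ IncreasingAE P Gr ∧ RespectsAE P Gr ∧
    (∀ s : MSp Ω, ∃ g : MSp Ω,
      IsEssSupM P
        (Gl '' {s' : MSp Ω | ∀ᵐ ω ∂P, ω ∈ {ω' | ⊥ < s.1 ω'} → s'.1 ω < s.1 ω}) g ∧
      ∀ᵐ ω ∂P, ω ∈ {ω' | ⊥ < s.1 ω'} → (Gl s).1 ω = g.1 ω) ∧
    (∀ s : MSp Ω, ∃ g : MSp Ω,
      IsEssInfM P
        (Gr '' {s' : MSp Ω | ∀ᵐ ω ∂P, ω ∈ {ω' | s.1 ω' < ⊤} → s.1 ω < s'.1 ω}) g ∧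
      ∀ᵐ ω ∂P, ω ∈ {ω' | s.1 ω' < ⊤} → (Gr s).1 ω = g.1 ω) := by
  have hGlinc := hGl.increasingAE hFloc hFinc
  have hGr' := hGr.isCondLeftInv_negConj
  have hGrinc : IncreasingAE P Gr :=
    negConj_negConj Gr ▸ (hGr'.increasingAE hFloc.negConj hFinc.negConj).negConj
  exact ⟨hGl.localAE hFloc hFinc, hGlinc, hGlinc.respectsAE,
    negConj_negConj Gr ▸ (hGr'.localAE hFloc.negConj hFinc.negConj).negConj, hGrinc,
    hGrinc.respectsAE, hGl.isLeftContinuousAE hFloc hFinc,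
    isRightContinuousAE_of_negConj (hGr'.isLeftContinuousAE hFloc.negConj hFinc.negConj)⟩

/-- Conditional left- and right-inverses of a local, increasing map `F : M → M` respecting
a.e. equality are themselves local, increasing, respect a.e. equality, and are left-
(respectively right-) continuous. -/
theorem condInverse_basic_properties (P : Measure Ω) [IsProbabilityMeasure P]
    (F Gl Gr : MSp Ω → MSp Ω)
    (hFloc : LocalAE P F) (hFinc : IncreasingAE P F) (hFae : RespectsAE P F)
    (hGl : IsCondLeftInv P F Gl) (hGr : IsCondRightInv P F Gr) :
    LocalAE P Gl ∧ IncreasingAE P Gl ∧ RespectsAE P Gl ∧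
    LocalAE P Gr ∧ IncreasingAE P Gr ∧ RespectsAE P Gr ∧
    (∀ s : MSp Ω, ∃ g : MSp Ω,
      IsEssSupM P
        (Gl '' {s' : MSp Ω | ∀ᵐ ω ∂P, ω ∈ {ω' | ⊥ < s.1 ω'} → s'.1 ω < s.1 ω}) g ∧
      ∀ᵐ ω ∂P, ω ∈ {ω' | ⊥ < s.1 ω'} → (Gl s).1 ω = g.1 ω) ∧
    (∀ s : MSp Ω, ∃ g : MSp Ω,
      IsEssInfM P
        (Gr '' {s' : MSp Ω | ∀ᵐ ω ∂P, ω ∈ {ω' | s.1 ω' < ⊤} → s.1 ω < s'.1 ω}) g ∧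
      ∀ᵐ ω ∂P, ω ∈ {ω' | s.1 ω' < ⊤} → (Gr s).1 ω = g.1 ω) :=
  condInverse_basic_properties_general P F Gl Gr hFloc hFinc hGl hGr
end

section
/- Involutivity of conditional inversion: let F : M → M be local, increasing, and respect a.e. equality, and let G be a conditional inverse of F. Then F is a conditional inverse of G; that is, for every m ∈ M: G⁻(F(m)) ≤ m ≤ G⁺(F(m)) a.e. on {G(−∞) < m < G(+∞)}, F(m) = −∞ a.e. on {m < G(−∞)}, and F(m) = +∞ a.e. on {G(+∞) < m}, where G⁻ and G⁺ denote the left- and right-continuous versions of G. -/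
open MeasureTheory

variable {Ω : Type*} [MeasurableSpace Ω]

/-- `G` is a conditional inverse of `F`: it is local, increasing, respects a.e. equality,
and for every left-continuous version `F⁻` and right-continuous version `F⁺` of `F` and
every `s ∈ M`: `F⁻(G(s)) ≤ s ≤ F⁺(G(s))` a.e. on `{F(-∞) < s < F(+∞)}`, `G(s) = -∞` a.e.
on `{s < F(-∞)}`, and `G(s) = +∞` a.e. on `{F(+∞) < s}`. -/
def IsCondInverse (P : Measure Ω) (F G : MSp Ω → MSp Ω) : Prop :=
  LocalAE P G ∧ IncreasingAE P G ∧ RespectsAE P G ∧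
  ∀ (Fm Fp : MSp Ω → MSp Ω), IsLeftContVersion P F Fm → IsRightContVersion P F Fp →
    ∀ s : MSp Ω,
      (∀ᵐ ω ∂P, (F (MSp.mbot Ω)).1 ω < s.1 ω → s.1 ω < (F (MSp.mtop Ω)).1 ω →
        (Fm (G s)).1 ω ≤ s.1 ω ∧ s.1 ω ≤ (Fp (G s)).1 ω) ∧
      (∀ᵐ ω ∂P, s.1 ω < (F (MSp.mbot Ω)).1 ω → (G s).1 ω = ⊥) ∧
      (∀ᵐ ω ∂P, (F (MSp.mtop Ω)).1 ω < s.1 ω → (G s).1 ω = ⊤)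

/-!
Because `G` inverts `F`, one gets the Galois-type relations "`G n ≤ m` a.e. where `n < F m`" and
"`m ≤ G n` a.e. where `F m < n`". For the first, if `m < G t` on some set, locality of `F` lets us
replace `m` there by a function lying strictly below `G t`, whence `F m ≤ F⁻(G t) ≤ t`; this
needs `F(-∞) < t`, which is arranged by passing from `n` to `n ⊔ q` for a rational `q` strictly
between `n` and `F m`. These relations bound the essential supremum and infimum defining
`G⁻(F m)` and `G⁺(F m)` by `m`, and also give the two boundary clauses.

The hypothesis on `G` only speaks through versions `F⁻`, `F⁺`, so these must exist, i.e. every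
family in `M` must have an essential supremum. For a finite measure, take a countable subfamily
`C` maximising `∫ σ(sup C)`, with `σ` a bounded strictly increasing map on `[-∞, ∞]`; strictness
of `σ` forces every member of the family below `sup C` a.e.
-/

open ENNReal

noncomputable def erealSigmoid : EReal → ℝ≥0∞ :=
  EReal.rec 0 (fun x => ENNReal.ofReal (Real.sigmoid x)) 1

lemma erealSigmoid_strictMono : StrictMono erealSigmoid := by
  intro x y hxy
  induction x <;> induction y <;>
    simp_all [erealSigmoid, Real.sigmoid_pos, Real.sigmoid_lt_one, Real.sigmoid_lt_iff]

lemma measurable_erealSigmoid : Measurable erealSigmoid :=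
  erealSigmoid_strictMono.monotone.measurable

lemma erealSigmoid_le_one (x : EReal) : erealSigmoid x ≤ 1 := by
  induction x <;> simp [erealSigmoid, (Real.sigmoid_lt_one _).le]

lemma lintegral_erealSigmoid_ne_top (P : Measure Ω) [IsFiniteMeasure P] (f : Ω → EReal) :
    ∫⁻ ω, erealSigmoid (f ω) ∂P ≠ ∞ :=
  ne_top_of_le_ne_top (by simp) (lintegral_mono fun ω => erealSigmoid_le_one (f ω))

lemma exists_countable_subset_forall_le {α : Type*} (S : Set α) {J : Set α → ℝ≥0∞}
    (hJ : Monotone J) : ∃ C ⊆ S, C.Countable ∧ ∀ D ⊆ S, D.Countable → J D ≤ J C := by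
  obtain ⟨u, -, hu, huS⟩ := exists_seq_tendsto_sSup (S := J '' {D | D ⊆ S ∧ D.Countable})
    ⟨J ∅, ∅, ⟨Set.empty_subset S, Set.countable_empty⟩, rfl⟩ (OrderTop.bddAbove _)
  choose C hC hJC using huS
  refine ⟨⋃ n, C n, Set.iUnion_subset fun n => (hC n).1, Set.countable_iUnion fun n => (hC n).2,
    fun D hDS hD => ?_⟩
  calc J D ≤ sSup (J '' {D | D ⊆ S ∧ D.Countable}) := le_sSup ⟨D, ⟨hDS, hD⟩, rfl⟩
    _ ≤ J (⋃ n, C n) := le_of_tendsto' hu fun n => hJC n ▸ hJ (Set.subset_iUnion C n)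

theorem exists_isEssSupM (P : Measure Ω) [IsFiniteMeasure P] (S : Set (MSp Ω)) :
    ∃ g, IsEssSupM P S g := by
  let sup (C : Set (MSp Ω)) (ω : Ω) : EReal := ⨆ f ∈ C, f.1 ω
  have sup_mono {C D : Set (MSp Ω)} (h : C ⊆ D) (ω : Ω) : sup C ω ≤ sup D ω := biSup_mono h
  have measurable_sup {C : Set (MSp Ω)} (hC : C.Countable) : Measurable (sup C) :=
    Measurable.biSup C hC fun f _ => f.2
  obtain ⟨C, hCS, hC, hC_max⟩ := exists_countable_subset_forall_le S
    (J := fun C => ∫⁻ ω, erealSigmoid (sup C ω) ∂P)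
    fun C D h => lintegral_mono fun ω => erealSigmoid_strictMono.monotone (sup_mono h ω)
  refine ⟨⟨sup C, measurable_sup hC⟩, fun f hf => ?_, fun h hh => ?_⟩
  · have h_insert : ∀ᵐ ω ∂P, erealSigmoid (sup C ω) = erealSigmoid (sup (insert f C) ω) :=
      ae_eq_of_ae_le_of_lintegral_le
        (ae_of_all _ fun ω => erealSigmoid_strictMono.monotone (sup_mono (Set.subset_insert f C) ω))
        (lintegral_erealSigmoid_ne_top P _)
        (measurable_erealSigmoid.comp (measurable_sup (hC.insert f))).aemeasurable
        (hC_max _ (Set.insert_subset hf hCS) (hC.insert f))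
    filter_upwards [h_insert] with ω hω
    rw [show sup C ω = sup (insert f C) ω from erealSigmoid_strictMono.injective hω]
    exact le_biSup (fun f : MSp Ω => f.1 ω) (Set.mem_insert f C)
  · filter_upwards [(ae_ball_iff hC).2 fun f hf => hh f (hCS hf)] with ω hω
    exact iSup₂_le hω

noncomputable def MSp.neg (f : MSp Ω) : MSp Ω := ⟨fun ω => -f.1 ω, f.2.neg⟩

theorem exists_isEssInfM (P : Measure Ω) [IsFiniteMeasure P] (S : Set (MSp Ω)) :
    ∃ g, IsEssInfM P S g := by
  obtain ⟨g, hg_ub, hg_least⟩ := exists_isEssSupM P (MSp.neg '' S)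
  refine ⟨g.neg, fun f hf => ?_, fun h hh => ?_⟩
  · filter_upwards [hg_ub f.neg ⟨f, hf, rfl⟩] with ω hω
    exact EReal.neg_le.1 hω
  · have hub : ∀ f ∈ MSp.neg '' S, f.1 ≤ᵐ[P] h.neg.1 := by
      rintro _ ⟨f, hf, rfl⟩
      filter_upwards [hh f hf] with ω hω
      exact EReal.neg_le_neg_iff.2 hω
    filter_upwards [hg_least h.neg hub] with ω hω
    exact EReal.le_neg.1 hω

theorem exists_isLeftContVersion (P : Measure Ω) [IsFiniteMeasure P] (F : MSp Ω → MSp Ω) :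
    ∃ Fm, IsLeftContVersion P F Fm := by
  choose g hg using fun m : MSp Ω =>
    exists_isEssSupM P (F '' {n : MSp Ω | ∀ᵐ ω ∂P, ω ∈ {ω' | ⊥ < m.1 ω'} → n.1 ω < m.1 ω})
  refine ⟨fun m => MSp.pc {ω | ⊥ < m.1 ω} (measurableSet_lt measurable_const m.2) (g m)
    (MSp.mbot Ω), fun m => ⟨ae_of_all _ fun ω hω => ?_, g m, hg m, ae_of_all _ fun ω hω => ?_⟩⟩
  · simp [MSp.pc, pcf, MSp.mbot, hω]
  · simp [MSp.pc, pcf, hω.out]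

theorem exists_isRightContVersion (P : Measure Ω) [IsFiniteMeasure P] (F : MSp Ω → MSp Ω) :
    ∃ Fp, IsRightContVersion P F Fp := by
  choose g hg using fun m : MSp Ω =>
    exists_isEssInfM P (F '' {n : MSp Ω | ∀ᵐ ω ∂P, ω ∈ {ω' | m.1 ω' < ⊤} → m.1 ω < n.1 ω})
  refine ⟨fun m => MSp.pc {ω | m.1 ω < ⊤} (measurableSet_lt m.2 measurable_const) (g m)
    (MSp.mtop Ω), fun m => ⟨ae_of_all _ fun ω hω => ?_, g m, hg m, ae_of_all _ fun ω hω => ?_⟩⟩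
  · simp [MSp.pc, pcf, MSp.mtop, hω]
  · simp [MSp.pc, pcf, hω.out]

def MSp.const (x : EReal) : MSp Ω := ⟨fun _ => x, measurable_const⟩

noncomputable def MSp.max (m n : MSp Ω) : MSp Ω := ⟨fun ω => m.1 ω ⊔ n.1 ω, m.2.max n.2⟩

noncomputable def MSp.min (m n : MSp Ω) : MSp Ω := ⟨fun ω => m.1 ω ⊓ n.1 ω, m.2.min n.2⟩

variable {P : Measure Ω} {F G Fm Fp : MSp Ω → MSp Ω}

lemma LocalAE.ae_apply_pc_of_mem (hF : LocalAE P F) {A : Set Ω} (hA : MeasurableSet A)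
    (m n : MSp Ω) : ∀ᵐ ω ∂P, ω ∈ A → (F (MSp.pc A hA m n)).1 ω = (F m).1 ω := by
  filter_upwards [hF A hA m n] with ω h hω
  simp [h, pcf, hω]

lemma IsLeftContVersion.ae_apply_le_of_lt (hFm : IsLeftContVersion P F Fm) (hF : LocalAE P F)
    (m u : MSp Ω) : ∀ᵐ ω ∂P, m.1 ω < u.1 ω → (F m).1 ω ≤ (Fm u).1 ω := by
  have hE := measurableSet_lt m.2 u.2
  obtain ⟨g, hg, hFm_eq⟩ := (hFm u).2
  have hn : ∀ᵐ ω ∂P, ω ∈ {ω | ⊥ < u.1 ω} → (MSp.pc _ hE m (MSp.mbot Ω)).1 ω < u.1 ω :=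
    ae_of_all _ fun ω hω => by
      by_cases h : m.1 ω < u.1 ω <;> simp [MSp.pc, pcf, MSp.mbot, h, hω.out]
  filter_upwards [hg.1 _ ⟨_, hn, rfl⟩, hF.ae_apply_pc_of_mem hE m (MSp.mbot Ω), hFm_eq]
    with ω hle heq hg_eq hlt
  calc (F m).1 ω = _ := (heq hlt).symm
    _ ≤ g.1 ω := hle
    _ = (Fm u).1 ω := (hg_eq (bot_le.trans_lt hlt)).symm

lemma IsRightContVersion.ae_le_apply_of_lt (hFp : IsRightContVersion P F Fp) (hF : LocalAE P F)
    (m u : MSp Ω) : ∀ᵐ ω ∂P, u.1 ω < m.1 ω → (Fp u).1 ω ≤ (F m).1 ω := by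
  have hE := measurableSet_lt u.2 m.2
  obtain ⟨g, hg, hFp_eq⟩ := (hFp u).2
  have hn : ∀ᵐ ω ∂P, ω ∈ {ω | u.1 ω < ⊤} → u.1 ω < (MSp.pc _ hE m (MSp.mtop Ω)).1 ω :=
    ae_of_all _ fun ω hω => by
      by_cases h : u.1 ω < m.1 ω <;> simp [MSp.pc, pcf, MSp.mtop, h, hω.out]
  filter_upwards [hg.1 _ ⟨_, hn, rfl⟩, hF.ae_apply_pc_of_mem hE m (MSp.mtop Ω), hFp_eq]
    with ω hle heq hg_eq hlt
  calc (Fp u).1 ω = g.1 ω := hg_eq (hlt.trans_le le_top)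
    _ ≤ _ := hle
    _ = (F m).1 ω := heq hlt

lemma IsLeftContVersion.ae_le_of_forall_lt (hFm : IsLeftContVersion P F Fm) {s m : MSp Ω}
    (h : ∀ n, ∀ᵐ ω ∂P, n.1 ω < s.1 ω → (F n).1 ω ≤ m.1 ω) : (Fm s).1 ≤ᵐ[P] m.1 := by
  obtain ⟨g, hg, hFm_eq⟩ := (hFm s).2
  have hA : MeasurableSet {ω | ⊥ < s.1 ω} := measurableSet_lt measurable_const s.2
  have hg_le : g.1 ≤ᵐ[P] (MSp.pc {ω | ⊥ < s.1 ω} hA m (MSp.mtop Ω)).1 := by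
    refine hg.2 _ ?_
    rintro _ ⟨n, hn, rfl⟩
    filter_upwards [hn, h n] with ω hns hFn
    by_cases hω : ⊥ < s.1 ω
    · simpa [MSp.pc, pcf, hω] using hFn (hns hω)
    · simp [MSp.pc, pcf, MSp.mtop, hω]
  filter_upwards [(hFm s).1, hFm_eq, hg_le] with ω hbot heq hle
  rcases eq_bot_or_bot_lt (s.1 ω) with hω | hω
  · simp [hbot hω]
  · simpa [heq hω, MSp.pc, pcf, hω] using hle

lemma IsRightContVersion.ae_ge_of_forall_lt (hFp : IsRightContVersion P F Fp) {s m : MSp Ω}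
    (h : ∀ n, ∀ᵐ ω ∂P, s.1 ω < n.1 ω → m.1 ω ≤ (F n).1 ω) : m.1 ≤ᵐ[P] (Fp s).1 := by
  obtain ⟨g, hg, hFp_eq⟩ := (hFp s).2
  have hA : MeasurableSet {ω | s.1 ω < ⊤} := measurableSet_lt s.2 measurable_const
  have hg_ge : (MSp.pc {ω | s.1 ω < ⊤} hA m (MSp.mbot Ω)).1 ≤ᵐ[P] g.1 := by
    refine hg.2 _ ?_
    rintro _ ⟨n, hn, rfl⟩
    filter_upwards [hn, h n] with ω hns hFn
    by_cases hω : s.1 ω < ⊤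
    · simpa [MSp.pc, pcf, hω] using hFn (hns hω)
    · simp [MSp.pc, pcf, MSp.mbot, hω]
  filter_upwards [(hFp s).1, hFp_eq, hg_ge] with ω htop heq hge
  rcases eq_top_or_lt_top (s.1 ω) with hω | hω
  · simp [htop hω]
  · simpa [heq hω, MSp.pc, pcf, hω] using hge

namespace IsCondInverse

theorem ae_le_of_lt_apply_of_apply_bot_lt (hG : IsCondInverse P F G) (hFloc : LocalAE P F)
    (hFinc : IncreasingAE P F) (hFm : IsLeftContVersion P F Fm) (hFp : IsRightContVersion P F Fp)
    (t m : MSp Ω) :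
    ∀ᵐ ω ∂P, (F (MSp.mbot Ω)).1 ω < t.1 ω → t.1 ω < (F m).1 ω → (G t).1 ω ≤ m.1 ω := by
  filter_upwards [(hG.2.2.2 Fm Fp hFm hFp t).1, hFm.ae_apply_le_of_lt hFloc m (G t),
    hFinc m (MSp.mtop Ω) (ae_of_all _ fun _ => le_top)] with ω hinv hFm_ge hF_top hbot hlt
  by_contra! hgt
  exact ((hFm_ge hgt).trans (hinv hbot (hlt.trans_le hF_top)).1).not_gt hlt

theorem ae_le_of_apply_lt_of_lt_apply_top (hG : IsCondInverse P F G) (hFloc : LocalAE P F)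
    (hFinc : IncreasingAE P F) (hFm : IsLeftContVersion P F Fm) (hFp : IsRightContVersion P F Fp)
    (t m : MSp Ω) :
    ∀ᵐ ω ∂P, (F m).1 ω < t.1 ω → t.1 ω < (F (MSp.mtop Ω)).1 ω → m.1 ω ≤ (G t).1 ω := by
  filter_upwards [(hG.2.2.2 Fm Fp hFm hFp t).1, hFp.ae_le_apply_of_lt hFloc m (G t),
    hFinc (MSp.mbot Ω) m (ae_of_all _ fun _ => bot_le)] with ω hinv hFp_le hF_bot hlt htop
  by_contra! hgt
  exact ((hinv (hF_bot.trans_lt hlt) htop).2.trans (hFp_le hgt)).not_gt hlt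

theorem ae_le_of_lt_apply (hG : IsCondInverse P F G) (hFloc : LocalAE P F)
    (hFinc : IncreasingAE P F) (hFm : IsLeftContVersion P F Fm) (hFp : IsRightContVersion P F Fp)
    (n m : MSp Ω) : ∀ᵐ ω ∂P, n.1 ω < (F m).1 ω → (G n).1 ω ≤ m.1 ω := by
  let t (q : ℚ) : MSp Ω := n.max (MSp.const ((q : ℝ) : EReal))
  have ht (q : ℚ) := (hG.2.1 n (t q) (ae_of_all _ fun _ => le_sup_left)).and
    (hG.ae_le_of_lt_apply_of_apply_bot_lt hFloc hFinc hFm hFp (t q) m)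
  filter_upwards [ae_all_iff.2 ht, (hG.2.2.2 Fm Fp hFm hFp n).2.1] with ω ht hbot hlt
  rcases lt_or_ge (n.1 ω) ((F (MSp.mbot Ω)).1 ω) with hn | hn
  · simp [hbot hn]
  obtain ⟨q, hnq, hqF⟩ := EReal.lt_iff_exists_rat_btwn.1 hlt
  obtain ⟨hG_mono, hG_le⟩ := ht q
  rw [show (t q).1 ω = ((q : ℝ) : EReal) from sup_eq_right.2 hnq.le] at hG_le
  exact hG_mono.trans (hG_le (hn.trans_lt hnq) hqF)

theorem ae_le_of_apply_lt (hG : IsCondInverse P F G) (hFloc : LocalAE P F)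
    (hFinc : IncreasingAE P F) (hFm : IsLeftContVersion P F Fm) (hFp : IsRightContVersion P F Fp)
    (n m : MSp Ω) : ∀ᵐ ω ∂P, (F m).1 ω < n.1 ω → m.1 ω ≤ (G n).1 ω := by
  let t (q : ℚ) : MSp Ω := n.min (MSp.const ((q : ℝ) : EReal))
  have ht (q : ℚ) := (hG.2.1 (t q) n (ae_of_all _ fun _ => inf_le_left)).and
    (hG.ae_le_of_apply_lt_of_lt_apply_top hFloc hFinc hFm hFp (t q) m)
  filter_upwards [ae_all_iff.2 ht, (hG.2.2.2 Fm Fp hFm hFp n).2.2] with ω ht htop hlt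
  rcases lt_or_ge ((F (MSp.mtop Ω)).1 ω) (n.1 ω) with hn | hn
  · simp [htop hn]
  obtain ⟨q, hFq, hqn⟩ := EReal.lt_iff_exists_rat_btwn.1 hlt
  obtain ⟨hG_mono, hG_ge⟩ := ht q
  rw [show (t q).1 ω = ((q : ℝ) : EReal) from inf_eq_right.2 hqn.le] at hG_ge
  exact (hG_ge hFq (hqn.trans_le hn)).trans hG_mono

end IsCondInverse

/-- Involutivity of conditional inversion: if `F : M → M` is local, increasing and
respects a.e. equality and `G` is a conditional inverse of `F`, then `F` is a conditional
inverse of `G`. -/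
theorem condInverse_involutive (P : Measure Ω) [IsProbabilityMeasure P]
    (F G : MSp Ω → MSp Ω)
    (hFloc : LocalAE P F) (hFinc : IncreasingAE P F) (hFae : RespectsAE P F)
    (hG : IsCondInverse P F G) :
    IsCondInverse P G F := by
  obtain ⟨Fm, hFm⟩ := exists_isLeftContVersion P F
  obtain ⟨Fp, hFp⟩ := exists_isRightContVersion P F
  have hle := hG.ae_le_of_lt_apply hFloc hFinc hFm hFp
  have hge := hG.ae_le_of_apply_lt hFloc hFinc hFm hFp
  refine ⟨hFloc, hFinc, hFae, fun Gm Gp hGm hGp m => ⟨?_, ?_, ?_⟩⟩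
  · filter_upwards [hGm.ae_le_of_forall_lt (hle · m), hGp.ae_ge_of_forall_lt (hge · m)]
      with ω hGm_le hGp_ge _ _
    exact ⟨hGm_le, hGp_ge⟩
  · filter_upwards [hle (MSp.mbot Ω) m] with ω h hlt
    by_contra hne
    exact (h (bot_lt_iff_ne_bot.2 hne)).not_gt hlt
  · filter_upwards [hge (MSp.mtop Ω) m] with ω h hlt
    by_contra hne
    exact (h (lt_top_iff_ne_top.2 hne)).not_gt hlt
end

section
/- Dynamic programming (Bellman) principle for strongly time consistent certainty equivalents: suppose for each t ∈ {0,…,T} a map C_t from adapted processes to F_t-measurable real-valued random variables is given such that (a) (certainty-equivalent property) for every t ≤ T−1 and every adapted process X, C_{t+1}(X^{t, C_{t+1}(X)}) = C_{t+1}(X) P-a.s., and (b) (strong time consistency) for every t ≤ T−1 and all adapted processes X, Y with X_s = Y_s P-a.s. for all s ≤ t, if C_{t+1}(X) ≥ C_{t+1}(Y) P-a.s. then C_t(X) ≥ C_t(Y) P-a.s. Then for every t ≤ T−1 and every adapted process X: C_t(X) = C_t(X^{t, C_{t+1}(X)}) P-a.s. -/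
open MeasureTheory

variable {Ω : Type*} {m0 : MeasurableSpace Ω}

/-- An adapted process with horizon `T`. -/
def AdaptedTo (ℱ : Filtration ℕ m0) (T : ℕ) (X : ℕ → Ω → ℝ) : Prop :=
  ∀ s ≤ T, Measurable[ℱ s] (X s)

/-- The process `X^{t,c}`, equal to `X_s` for `s ≤ t` and to `c` afterwards
(i.e. `X_{[0,t]} + c·1_{[t+1,T]}`). -/
def stopAt (X : ℕ → Ω → ℝ) (t : ℕ) (c : Ω → ℝ) : ℕ → Ω → ℝ :=
  fun s => if s ≤ t then X s else c

theorem AdaptedTo.stopAt {ℱ : Filtration ℕ m0} {T t : ℕ} {X : ℕ → Ω → ℝ} {c : Ω → ℝ}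
    (hX : AdaptedTo ℱ T X) (hc : Measurable[ℱ (t + 1)] c) :
    AdaptedTo ℱ T (stopAt X t c) := by
  intro s hs
  by_cases hst : s ≤ t
  · simpa [_root_.stopAt, hst] using hX s hs
  · simpa [_root_.stopAt, hst] using hc.mono (ℱ.mono (by omega)) le_rfl

theorem stopAt_of_le (X : ℕ → Ω → ℝ) {s t : ℕ} (c : Ω → ℝ) (hst : s ≤ t) :
    stopAt X t c s = X s := if_pos hst

theorem ae_eq_of_timeConsistent {ℱ : Filtration ℕ m0} {P : Measure Ω} {T t : ℕ}
    {C C' : (ℕ → Ω → ℝ) → Ω → ℝ}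
    (hTC : ∀ X Y : ℕ → Ω → ℝ, AdaptedTo ℱ T X → AdaptedTo ℱ T Y →
      (∀ s ≤ t, X s =ᵐ[P] Y s) → C' Y ≤ᵐ[P] C' X → C Y ≤ᵐ[P] C X)
    {X Y : ℕ → Ω → ℝ} (hX : AdaptedTo ℱ T X) (hY : AdaptedTo ℱ T Y)
    (hXY : ∀ s ≤ t, X s =ᵐ[P] Y s) (h : C' X =ᵐ[P] C' Y) : C X =ᵐ[P] C Y :=
  (hTC Y X hY hX (fun s hs => (hXY s hs).symm) h.le).antisymm
    (hTC X Y hX hY hXY h.symm.le)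

theorem bellman_principle_general (ℱ : Filtration ℕ m0) (P : Measure Ω) (T : ℕ)
    (C : ℕ → (ℕ → Ω → ℝ) → Ω → ℝ)
    (hmeas : ∀ t ≤ T, ∀ X : ℕ → Ω → ℝ, AdaptedTo ℱ T X → Measurable[ℱ t] (C t X))
    (hCE : ∀ t : ℕ, t + 1 ≤ T → ∀ X : ℕ → Ω → ℝ, AdaptedTo ℱ T X →
      C (t + 1) (stopAt X t (C (t + 1) X)) =ᵐ[P] C (t + 1) X)
    (hTC : ∀ t : ℕ, t + 1 ≤ T → ∀ X Y : ℕ → Ω → ℝ,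
      AdaptedTo ℱ T X → AdaptedTo ℱ T Y → (∀ s ≤ t, X s =ᵐ[P] Y s) →
      C (t + 1) Y ≤ᵐ[P] C (t + 1) X → C t Y ≤ᵐ[P] C t X) :
    ∀ t : ℕ, t + 1 ≤ T → ∀ X : ℕ → Ω → ℝ, AdaptedTo ℱ T X →
      C t X =ᵐ[P] C t (stopAt X t (C (t + 1) X)) := by
  intro t ht X hX
  exact ae_eq_of_timeConsistent (hTC t ht) hX (hX.stopAt (hmeas (t + 1) ht X hX))
    (fun s hs => by rw [stopAt_of_le X _ hs]) (hCE t ht X hX).symm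

/-- Dynamic programming (Bellman) principle for strongly time consistent certainty
equivalents: if each `C_t` maps adapted processes to `F_t`-measurable random variables and
satisfies the certainty-equivalent property `C_{t+1}(X^{t, C_{t+1}(X)}) = C_{t+1}(X)` a.s.
as well as strong time consistency, then `C_t(X) = C_t(X^{t, C_{t+1}(X)})` a.s. for every
adapted `X` and every `t ≤ T - 1`. -/
theorem bellman_principle (ℱ : Filtration ℕ m0) (P : Measure Ω)
    [IsProbabilityMeasure P] (T : ℕ)
    (C : ℕ → (ℕ → Ω → ℝ) → Ω → ℝ)
    (hmeas : ∀ t ≤ T, ∀ X : ℕ → Ω → ℝ, AdaptedTo ℱ T X → Measurable[ℱ t] (C t X))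
    (hCE : ∀ t : ℕ, t + 1 ≤ T → ∀ X : ℕ → Ω → ℝ, AdaptedTo ℱ T X →
      C (t + 1) (stopAt X t (C (t + 1) X)) =ᵐ[P] C (t + 1) X)
    (hTC : ∀ t : ℕ, t + 1 ≤ T → ∀ X Y : ℕ → Ω → ℝ,
      AdaptedTo ℱ T X → AdaptedTo ℱ T Y → (∀ s ≤ t, X s =ᵐ[P] Y s) →
      C (t + 1) Y ≤ᵐ[P] C (t + 1) X → C t Y ≤ᵐ[P] C t X) :
    ∀ t : ℕ, t + 1 ≤ T → ∀ X : ℕ → Ω → ℝ, AdaptedTo ℱ T X →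
      C t X =ᵐ[P] C t (stopAt X t (C (t + 1) X)) :=
  bellman_principle_general ℱ P T C hmeas hCE hTC
end
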